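/- Let σ₁₃, σ₂₃ ≥ 0 and take α = 3. Define γ₂ : ℝ → ℝ by γ₂(φ) = (3/(2√2))·[σ₁₃((1+φ)/2)²(2−φ) + σ₂₃((1−φ)/2)²(2+φ) + (3/16)|σ₂₃−σ₁₃|(1−φ²)²]. Then γ₂″(φ) ≥ 0 for every φ with |φ| ≥ 1, i.e. γ₂ is convex outside the interval (−1, 1). -/

import Mathlib

/-!
`γ₂` is a quartic in `φ`; with `d = σ₂₃ - σ₁₃` its second derivative is
`9 / (8√2) · (|d| (3φ² - 1) + 2dφ)`. For `|φ| ≥ 1` the cross term satisfies `2dφ ≥ -2|d||φ|`,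
and `3φ² - 1 - 2|φ| = (3|φ| + 1)(|φ| - 1) ≥ 0`.
-/

theorem deriv_deriv_quartic (a b c d e x : ℝ) :
    deriv (deriv fun x : ℝ => a + b * x + c * x ^ 2 + d * x ^ 3 + e * x ^ 4) x =
      2 * c + 6 * d * x + 12 * e * x ^ 2 := by
  have hderiv : deriv (fun x : ℝ => a + b * x + c * x ^ 2 + d * x ^ 3 + e * x ^ 4) =
      fun x => b + 2 * c * x + 3 * d * x ^ 2 + 4 * e * x ^ 3 := by
    funext x
    apply HasDerivAt.deriv
    convert ((((hasDerivAt_const x a).add ((hasDerivAt_id x).const_mul b)).add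
      ((hasDerivAt_pow 2 x).const_mul c)).add ((hasDerivAt_pow 3 x).const_mul d)).add
      ((hasDerivAt_pow 4 x).const_mul e) using 1
    · rfl
    · norm_num; ring
  rw [hderiv]
  apply HasDerivAt.deriv
  convert (((hasDerivAt_id x).const_mul (2 * c)).const_add b |>.add
    ((hasDerivAt_pow 2 x).const_mul (3 * d))).add ((hasDerivAt_pow 3 x).const_mul (4 * e)) using 1
  · funext y; simp [mul_assoc]
  · norm_num; ring

theorem abs_mul_three_mul_sq_sub_one_add_two_mul_mul_nonneg {d φ : ℝ} (hφ : 1 ≤ |φ|) :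
    0 ≤ |d| * (3 * φ ^ 2 - 1) + 2 * d * φ := by
  have hcross : -(|d| * |φ|) ≤ d * φ := abs_mul d φ ▸ neg_abs_le (d * φ)
  have hquad : 0 ≤ 3 * φ ^ 2 - 1 - 2 * |φ| := by
    have : 3 * φ ^ 2 - 1 - 2 * |φ| = (3 * |φ| + 1) * (|φ| - 1) := by
      rw [← sq_abs φ]; ring
    rw [this]; exact mul_nonneg (by positivity) (by linarith)
  nlinarith [mul_nonneg (abs_nonneg d) hquad]

theorem gamma2_convex_outside_general (σ₁₃ σ₂₃ : ℝ)
    (γ₂ : ℝ → ℝ)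
    (hγ₂ : ∀ φ : ℝ, γ₂ φ =
      3 / (2 * Real.sqrt 2) *
        (σ₁₃ * ((1 + φ) / 2) ^ 2 * (2 - φ) + σ₂₃ * ((1 - φ) / 2) ^ 2 * (2 + φ) +
          3 / 16 * |σ₂₃ - σ₁₃| * (1 - φ ^ 2) ^ 2)) :
    ∀ φ : ℝ, 1 ≤ |φ| → 0 ≤ deriv (deriv γ₂) φ := by
  intro φ hφ
  set c := 3 / (2 * Real.sqrt 2)
  set M := 3 / 16 * |σ₂₃ - σ₁₃|
  have hquartic : γ₂ = fun x : ℝ =>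
      c * (σ₁₃ / 2 + σ₂₃ / 2 + M) + c * (3 / 4 * (σ₁₃ - σ₂₃)) * x + (-2 * c * M) * x ^ 2 +
        c * ((σ₂₃ - σ₁₃) / 4) * x ^ 3 + (c * M) * x ^ 4 := by
    funext x; rw [hγ₂ x]; ring
  have hsecond : deriv (deriv γ₂) φ =
      3 / 4 * c * (|σ₂₃ - σ₁₃| * (3 * φ ^ 2 - 1) + 2 * (σ₂₃ - σ₁₃) * φ) := by
    rw [hquartic, deriv_deriv_quartic]; ring
  rw [hsecond]
  exact mul_nonneg (by positivity) (abs_mul_three_mul_sq_sub_one_add_two_mul_mul_nonneg hφ)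

/-- For `σ₁₃, σ₂₃ ≥ 0` and `α = 3`, the interpolation
`γ₂(φ) = (3/(2√2))·[σ₁₃((1+φ)/2)²(2−φ) + σ₂₃((1−φ)/2)²(2+φ) + (3/16)|σ₂₃−σ₁₃|(1−φ²)²]`
satisfies `γ₂″(φ) ≥ 0` whenever `|φ| ≥ 1`, i.e. it is convex outside the
interval `(−1, 1)`. -/
theorem gamma2_convex_outside (σ₁₃ σ₂₃ : ℝ) (h13 : 0 ≤ σ₁₃) (h23 : 0 ≤ σ₂₃)
    (γ₂ : ℝ → ℝ)
    (hγ₂ : ∀ φ : ℝ, γ₂ φ =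
      3 / (2 * Real.sqrt 2) *
        (σ₁₃ * ((1 + φ) / 2) ^ 2 * (2 - φ) + σ₂₃ * ((1 - φ) / 2) ^ 2 * (2 + φ) +
          3 / 16 * |σ₂₃ - σ₁₃| * (1 - φ ^ 2) ^ 2)) :
    ∀ φ : ℝ, 1 ≤ |φ| → 0 ≤ deriv (deriv γ₂) φ :=
  gamma2_convex_outside_general σ₁₃ σ₂₃ γ₂ hγ₂
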